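/- Assumption 4 can fail in the full-rank Cholesky family even for a strongly convex ℓ. Concretely, let d = 2, A = [[1, −2], [−2, 5]] (a positive-definite symmetric matrix, so ℓ(z) = (1/2) zᵀ A z is strongly convex), C = [[1, 0], [1, 1]], and m = 0. If the coordinates u_1, u_2 of u are independent with E[u_i] = 0 and E[u_i²] = 1, then E[g_1(λ; u) · u_1] = E[(A C u)_1 · u_1] = −1 < 0, where g(λ; u) = (∇ℓ)(C u + m). -/

import Mathlib

/-! Since `∇ℓ(z) = A z`, the integrand is `(A C u)₁ u₁ = (AC)₁₁ u₁² + (AC)₁₂ u₂ u₁`. Independence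
and centring kill the cross term, so `E[g₁(λ;u) u₁] = (AC)₁₁`. Positive definiteness of `A` says
nothing about the sign of the diagonal of `AC`: here `(AC)₁₁ = 1 - 2 = -1`. -/

open MeasureTheory ProbabilityTheory Matrix

noncomputable section

abbrev Euc (d : ℕ) := EuclideanSpace ℝ (Fin d)

/-- The quadratic function `ℓ(z) = (1/2) zᵀ A z`. -/
def quadForm {d : ℕ} (A : Matrix (Fin d) (Fin d) ℝ) : Euc d → ℝ :=
  fun z => (1 / 2) * ∑ i, ∑ j, z i * A i j * z j

theorem isSymm_fin_two {α : Type*} (a b c : α) : (!![a, b; b, c]).IsSymm := by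
  ext i j; fin_cases i <;> fin_cases j <;> rfl

theorem posDef_fin_two {a b c : ℝ} (ha : 0 < a) (hdet : b ^ 2 < a * c) :
    (!![a, b; b, c]).PosDef := by
  refine PosDef.of_dotProduct_mulVec_pos (isHermitian_iff_isSymm.mpr (isSymm_fin_two a b c))
    fun x hx => pos_of_mul_pos_right ?_ ha.le
  have hsq : a * (star x ⬝ᵥ !![a, b; b, c] *ᵥ x)
      = (a * x 0 + b * x 1) ^ 2 + (a * c - b ^ 2) * x 1 ^ 2 := by
    simp only [dotProduct, mulVec, Pi.star_apply, star_trivial, of_apply, cons_val',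
      cons_val_fin_one, cons_val_zero, cons_val_one, Fin.sum_univ_two]
    ring
  rw [hsq]
  by_cases h1 : x 1 = 0
  · have h0 : x 0 ≠ 0 := fun h0 => hx (by ext i; fin_cases i <;> simp [h0, h1])
    simpa [h1] using sq_pos_of_ne_zero (mul_ne_zero ha.ne' h0)
  · exact add_pos_of_nonneg_of_pos (sq_nonneg _)
      (mul_pos (sub_pos.mpr hdet) (sq_pos_of_ne_zero h1))

theorem quadForm_eq_half_reApplyInnerSelf {d : ℕ} (A : Matrix (Fin d) (Fin d) ℝ) :
    quadForm A = fun z => (1 / 2) * (toEuclideanCLM (𝕜 := ℝ) A).reApplyInnerSelf z := by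
  ext z
  rw [ContinuousLinearMap.reApplyInnerSelf_apply, RCLike.re_to_real, real_inner_comm,
    inner_toEuclideanCLM]
  simp only [quadForm, dotProduct, mulVec, Finset.mul_sum, mul_assoc]

theorem hasGradientAt_quadForm {d : ℕ} {A : Matrix (Fin d) (Fin d) ℝ} (hA : A.IsSymm)
    (z : Euc d) : HasGradientAt (quadForm A) (WithLp.toLp 2 (A *ᵥ z)) z := by
  have hT : ((toEuclideanCLM (𝕜 := ℝ) A : Euc d →L[ℝ] Euc d) : Euc d →ₗ[ℝ] Euc d).IsSymmetric :=
    isSymmetric_toEuclideanLin_iff.mpr (isHermitian_iff_isSymm.mpr hA)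
  have hTz : toEuclideanCLM (𝕜 := ℝ) A z = WithLp.toLp 2 (A *ᵥ z) := rfl
  rw [hasGradientAt_iff_hasFDerivAt, quadForm_eq_half_reApplyInnerSelf]
  refine ((hT.hasStrictFDerivAt_reApplyInnerSelf z).hasFDerivAt.const_mul (1 / 2 : ℝ))
    |>.congr_fderiv ?_
  ext h
  simp [hTz]

theorem gradient_quadForm {d : ℕ} {A : Matrix (Fin d) (Fin d) ℝ} (hA : A.IsSymm) (z : Euc d) :
    gradient (quadForm A) z = WithLp.toLp 2 (A *ᵥ z) :=
  (hasGradientAt_quadForm hA z).gradient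

theorem ProbabilityTheory.IndepFun.integral_linear_mul_eq {Ω : Type*} [MeasurableSpace Ω]
    {μ : Measure Ω} {X Y : Ω → ℝ} (hXY : IndepFun X Y μ) (hX : Integrable X μ) (hY : Integrable Y μ)
    (hX2 : Integrable (fun ω => X ω ^ 2) μ) (hX0 : ∫ ω, X ω ∂μ = 0) (a b : ℝ) :
    ∫ ω, (a * X ω + b * Y ω) * X ω ∂μ = a * ∫ ω, X ω ^ 2 ∂μ := by
  have hYX : Integrable (fun ω => Y ω * X ω) μ := hXY.symm.integrable_mul hY hX
  have hYX0 : ∫ ω, Y ω * X ω ∂μ = 0 := by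
    simpa [hX0] using hXY.symm.integral_mul_eq_mul_integral hY.1 hX.1
  calc ∫ ω, (a * X ω + b * Y ω) * X ω ∂μ = ∫ ω, a * X ω ^ 2 + b * (Y ω * X ω) ∂μ := by
        congr 1; ext ω; ring
    _ = a * ∫ ω, X ω ^ 2 ∂μ := by
        rw [integral_add (hX2.const_mul a) (hYX.const_mul b), integral_const_mul,
          integral_const_mul, hYX0, mul_zero, add_zero]

theorem assumption_four_counterexample_general
    {Ω : Type*} [MeasurableSpace Ω] (μ : Measure Ω)
    (u : Ω → Fin 2 → ℝ)
    (hindep : IndepFun (fun ω => u ω 0) (fun ω => u ω 1) μ)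
    (hmean : ∀ i, ∫ ω, u ω i ∂μ = 0)
    (hvar : ∀ i, ∫ ω, (u ω i) ^ 2 ∂μ = 1)
    (hint1 : ∀ i, Integrable (fun ω => u ω i) μ)
    (hint2 : ∀ i j, Integrable (fun ω => u ω i * u ω j) μ)
    (A C : Matrix (Fin 2) (Fin 2) ℝ)
    (hA : A = !![1, -2; -2, 5]) (hC : C = !![1, 0; 1, 1])
    (m : Euc 2) (hm : m = 0) :
    (Matrix.PosDef A ∧ A.IsSymm) ∧
    (∫ ω, gradient (quadForm A) (WithLp.toLp 2 (fun i => C.mulVec (u ω) i + m i) : Euc 2) 0 * u ω 0 ∂μ)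
      = ∫ ω, (A * C).mulVec (u ω) 0 * u ω 0 ∂μ ∧
    (∫ ω, gradient (quadForm A) (WithLp.toLp 2 (fun i => C.mulVec (u ω) i + m i) : Euc 2) 0 * u ω 0 ∂μ)
      = -1 ∧
    (∫ ω, gradient (quadForm A) (WithLp.toLp 2 (fun i => C.mulVec (u ω) i + m i) : Euc 2) 0 * u ω 0 ∂μ)
      < 0 := by
  have hsymm : A.IsSymm := hA ▸ isSymm_fin_two _ _ _
  have hPD : A.PosDef := hA ▸ posDef_fin_two (by norm_num) (by norm_num)
  have hgrad : ∫ ω, gradient (quadForm A)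
      (WithLp.toLp 2 (fun i => C.mulVec (u ω) i + m i) : Euc 2) 0 * u ω 0 ∂μ
      = ∫ ω, (A * C).mulVec (u ω) 0 * u ω 0 ∂μ := by
    simp only [hm, WithLp.ofLp_zero, Pi.zero_apply, add_zero, gradient_quadForm hsymm,
      WithLp.ofLp_toLp, mulVec_mulVec]
  have hAC : A * C = !![-1, -2; 3, 5] := by
    rw [hA, hC, mul_fin_two]
    norm_num
  have hrow : ∀ v : Fin 2 → ℝ, (A * C).mulVec v 0 = -1 * v 0 + -2 * v 1 := fun v => by
    simp [hAC, mulVec, dotProduct, Fin.sum_univ_two]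
  have hexp : ∫ ω, (A * C).mulVec (u ω) 0 * u ω 0 ∂μ = -1 := by
    simp_rw [hrow]
    rw [hindep.integral_linear_mul_eq (hint1 0) (hint1 1) (by simpa only [sq] using hint2 0 0)
      (hmean 0), hvar 0, mul_one]
  refine ⟨⟨hPD, hsymm⟩, hgrad, hgrad.trans hexp, ?_⟩
  rw [hgrad, hexp]
  exact neg_one_lt_zero

/-- Assumption 4 can fail in the full-rank Cholesky family even for a
strongly convex `ℓ`.  With `d = 2`, `A = [[1,−2],[−2,5]]` (positive definite and
symmetric, so `ℓ(z) = (1/2) zᵀ A z` is strongly convex), `C = [[1,0],[1,1]]` and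
`m = 0`, if `u₁, u₂` are independent with mean `0` and second moment `1`, then
`E[g₁(λ;u) · u₁] = E[(A C u)₁ · u₁] = −1 < 0`, where `g(λ;u) = ∇ℓ(C u + m)`. -/
theorem assumption_four_counterexample
    {Ω : Type*} [MeasurableSpace Ω] (μ : Measure Ω) [IsProbabilityMeasure μ]
    (u : Ω → Fin 2 → ℝ)
    (hmeas : ∀ i, Measurable fun ω => u ω i)
    (hindep : IndepFun (fun ω => u ω 0) (fun ω => u ω 1) μ)
    (hmean : ∀ i, ∫ ω, u ω i ∂μ = 0)
    (hvar : ∀ i, ∫ ω, (u ω i) ^ 2 ∂μ = 1)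
    (hint1 : ∀ i, Integrable (fun ω => u ω i) μ)
    (hint2 : ∀ i j, Integrable (fun ω => u ω i * u ω j) μ)
    (A C : Matrix (Fin 2) (Fin 2) ℝ)
    (hA : A = !![1, -2; -2, 5]) (hC : C = !![1, 0; 1, 1])
    (m : Euc 2) (hm : m = 0) :
    (Matrix.PosDef A ∧ A.IsSymm) ∧
    (∫ ω, gradient (quadForm A) (WithLp.toLp 2 (fun i => C.mulVec (u ω) i + m i) : Euc 2) 0 * u ω 0 ∂μ)
      = ∫ ω, (A * C).mulVec (u ω) 0 * u ω 0 ∂μ ∧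
    (∫ ω, gradient (quadForm A) (WithLp.toLp 2 (fun i => C.mulVec (u ω) i + m i) : Euc 2) 0 * u ω 0 ∂μ)
      = -1 ∧
    (∫ ω, gradient (quadForm A) (WithLp.toLp 2 (fun i => C.mulVec (u ω) i + m i) : Euc 2) 0 * u ω 0 ∂μ)
      < 0 :=
  assumption_four_counterexample_general μ u hindep hmean hvar hint1 hint2 A C hA hC m hm

end
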